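/- Let α > 0, let κ > 1, let m : [0,α] → ℝ be continuous, let Φ(ζ) = ζ^κ m(ζ) for ζ ∈ (0,α], and let G be the kernel associated with α and Φ. Then G is Lebesgue integrable on (−1,1); in particular the constants Γ = ∫_{−1}^{1} G(θ) dθ and ∫₀¹ θ²(G(θ)+G(−θ)) dθ are finite. -/

import Mathlib

open MeasureTheory Set Filter Topology

/-- The kernel G associated with α and Φ:
G(θ) = (α/√π) ∫_{α|θ|}^{α} (ζ² - α²θ²)^{-1/2}
         exp(-α²ζ²(1-θ)²/(4(ζ² - α²θ²))) Φ(ζ)/ζ² dζ. -/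
noncomputable def kernelG (α : ℝ) (Φ : ℝ → ℝ) (θ : ℝ) : ℝ :=
  (α / Real.sqrt Real.pi) *
    ∫ ζ in (α * |θ|)..α,
      (1 / Real.sqrt (ζ ^ 2 - α ^ 2 * θ ^ 2)) *
        Real.exp (-(α ^ 2 * ζ ^ 2 * (1 - θ) ^ 2) / (4 * (ζ ^ 2 - α ^ 2 * θ ^ 2))) *
        (Φ ζ / ζ ^ 2)


lemma aux_shift_integrableOn {a b p : ℝ} (hp : 0 < p) :
    IntegrableOn (fun ζ => (ζ - a) ^ (p - 1)) (Ioc a b) volume := by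
  have h1 : IntervalIntegrable (fun x : ℝ => x ^ (p - 1)) volume 0 (b - a) :=
    intervalIntegral.intervalIntegrable_rpow' (by linarith)
  have h2 := h1.comp_sub_right a
  simp only [zero_add, sub_add_cancel] at h2
  exact h2.1

lemma aux_shift_integral {a b p : ℝ} (hp : 0 < p) (hab : a ≤ b) :
    ∫ ζ in Ioc a b, (ζ - a) ^ (p - 1) = (b - a) ^ p / p := by
  rw [← intervalIntegral.integral_of_le hab,
    intervalIntegral.integral_comp_sub_right (fun x => x ^ (p - 1)) a, sub_self,
    integral_rpow (Or.inl (by linarith))]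
  rw [Real.zero_rpow (by rw [sub_add_cancel]; exact hp.ne' : p - 1 + 1 ≠ 0)]
  ring_nf

lemma aux_dom_integrable (q : ℝ) (hq : -1 < q) (C : ℝ) :
    IntegrableOn (fun θ : ℝ => C * (|θ| ^ q + 1)) (Ioo (-1) 1) volume := by
  have h1 : IntegrableOn (fun θ : ℝ => |θ| ^ q) (Ioc 0 1) volume := by
    refine ((intervalIntegral.intervalIntegrable_rpow' hq (a := 0) (b := 1)).1).congr_fun
      (fun x hx => ?_) measurableSet_Ioc
    rw [abs_of_pos hx.1]
  have h2 : IntegrableOn (fun θ : ℝ => |θ| ^ q) (Ioc (-1) 0) volume := by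
    have := ((IntervalIntegrable.iff_comp_neg (by simp)).mp
      (intervalIntegral.intervalIntegrable_rpow' hq (a := 1) (b := 0))).1
    simp only [neg_neg, neg_zero] at this
    refine this.congr_fun (fun x hx => ?_) measurableSet_Ioc
    rw [abs_of_nonpos hx.2]
  have h3 : IntegrableOn (fun θ : ℝ => |θ| ^ q) (Ioo (-1) 1) volume := by
    refine (h2.union h1).mono_set fun x hx => ?_
    rcases le_or_gt x 0 with h | h
    · exact Or.inl ⟨hx.1, h⟩
    · exact Or.inr ⟨h, hx.2.le⟩
  have h4 : IntegrableOn (fun _ : ℝ => (1 : ℝ)) (Ioo (-1) 1) volume :=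
    integrableOn_const measure_Ioo_lt_top.ne
  exact ((h3.add h4).const_mul C)

/-- For Φ(ζ) = ζ^κ m(ζ) with κ > 1 and m continuous, the kernel G is
Lebesgue integrable on (-1,1); in particular Γ = ∫_{-1}^1 G(θ) dθ and
∫₀¹ θ²(G(θ)+G(-θ)) dθ are finite. -/
theorem kernelG_integrable
    (α κ : ℝ) (hα : 0 < α) (hκ : 1 < κ)
    (m : ℝ → ℝ) (hm : ContinuousOn m (Icc 0 α)) :
    IntegrableOn (kernelG α (fun ζ => ζ ^ κ * m ζ)) (Ioo (-1) 1) volume := by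
  obtain ⟨M, hM⟩ := isCompact_Icc.exists_bound_of_continuousOn hm
  have hM0 : 0 ≤ M := le_trans (norm_nonneg _) (hM 0 ⟨le_refl 0, hα.le⟩)
  set p : ℝ := min (1/2) ((κ - 1)/2) with hpdef
  have hp0 : 0 < p := lt_min (by norm_num) (by linarith)
  have hp2 : p ≤ 1/2 := min_le_left _ _
  set q : ℝ := κ - 2 - p with hqdef
  have hq : -1 < q := by
    have h := min_le_right (1/2 : ℝ) ((κ - 1)/2)
    rw [hqdef, hpdef]; linarith
  -- clamped version of m, continuous on all of ℝ
  set m' : ℝ → ℝ := fun x => m (max 0 (min x α)) with hm'def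
  have hclmem : ∀ x : ℝ, max 0 (min x α) ∈ Icc 0 α :=
    fun x => ⟨le_max_left _ _, max_le hα.le (min_le_right x α)⟩
  have hm'c : Continuous m' :=
    hm.comp_continuous (continuous_const.max (continuous_id.min continuous_const)) hclmem
  have hm'b : ∀ x, ‖m' x‖ ≤ M := fun x => hM _ (hclmem x)
  have hm'eq : ∀ x ∈ Icc (0:ℝ) α, m' x = m x := by
    intro x hx
    simp only [hm'def, min_eq_left hx.2, max_eq_right hx.1]
  set F : ℝ → ℝ → ℝ := fun θ ζ =>
    (1 / Real.sqrt (ζ ^ 2 - α ^ 2 * θ ^ 2)) *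
      Real.exp (-(α ^ 2 * ζ ^ 2 * (1 - θ) ^ 2) / (4 * (ζ ^ 2 - α ^ 2 * θ ^ 2))) *
      (ζ ^ κ * m' ζ / ζ ^ 2) with hF
  set S : Set (ℝ × ℝ) := {pr | α * |pr.1| < pr.2 ∧ pr.2 ≤ α} with hS
  set H : ℝ → ℝ := fun θ => ∫ ζ, S.indicator (fun pr => F pr.1 pr.2) (θ, ζ) with hH
  have hkey : ∀ θ ζ : ℝ, S.indicator (fun pr => F pr.1 pr.2) (θ, ζ) =
      (Ioc (α * |θ|) α).indicator (F θ) ζ := by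
    intro θ ζ
    simp only [Set.indicator, hS, Set.mem_setOf_eq, Set.mem_Ioc]
  -- measurability
  have hSmeas : MeasurableSet S :=
    (measurableSet_lt (measurable_fst.abs.const_mul α) measurable_snd).inter
      (measurableSet_le measurable_snd measurable_const)
  have hFmeas : StronglyMeasurable fun pr : ℝ × ℝ =>
      S.indicator (fun pr => F pr.1 pr.2) pr := by
    apply Measurable.stronglyMeasurable
    apply Measurable.indicator _ hSmeas
    simp only [hF]
    fun_prop
  have hHmeas : StronglyMeasurable H := hFmeas.integral_prod_right'
  -- value of H on Ioc
  have hHval : ∀ θ : ℝ, H θ = ∫ ζ in Ioc (α * |θ|) α, F θ ζ := by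
    intro θ
    rw [hH]
    simp only [hkey]
    rw [integral_indicator measurableSet_Ioc]
  -- kernelG agrees with c * H on Ioo (-1) 1
  have hEq : EqOn (fun θ => (α / Real.sqrt Real.pi) * H θ)
      (kernelG α (fun ζ => ζ ^ κ * m ζ)) (Ioo (-1) 1) := by
    intro θ hθ
    have habs : |θ| ≤ 1 := by rw [abs_le]; exact ⟨hθ.1.le, hθ.2.le⟩
    have ha : α * |θ| ≤ α := by
      calc α * |θ| ≤ α * 1 := mul_le_mul_of_nonneg_left habs hα.le
        _ = α := mul_one α
    simp only [kernelG]
    rw [hHval θ, intervalIntegral.integral_of_le ha]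
    congr 1
    apply setIntegral_congr_fun measurableSet_Ioc
    intro ζ hζ
    have hζ0 : 0 < ζ := lt_of_le_of_lt (by positivity) hζ.1
    simp only [hF, hm'eq ζ ⟨hζ0.le, hζ.2⟩]
  -- the constant
  set C : ℝ := |α / Real.sqrt Real.pi| * (M * (α ^ q * (α ^ p / p))) with hC
  -- pointwise bound
  have hbound : ∀ θ : ℝ, θ ≠ 0 → θ ∈ Ioo (-1:ℝ) 1 →
      ‖(α / Real.sqrt Real.pi) * H θ‖ ≤ C * (|θ| ^ q + 1) := by
    intro θ hθ0 hθ
    set a : ℝ := α * |θ| with hadef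
    have ha0 : 0 < a := by positivity
    have habs : |θ| ≤ 1 := by rw [abs_le]; exact ⟨hθ.1.le, hθ.2.le⟩
    have haα : a ≤ α := by
      calc α * |θ| ≤ α * 1 := mul_le_mul_of_nonneg_left habs hα.le
        _ = α := mul_one α
    -- inner pointwise bound
    have hptwise : ∀ ζ ∈ Ioc a α,
        ‖F θ ζ‖ ≤ (M * (a ^ q + α ^ q)) * (ζ - a) ^ (p - 1) := by
      intro ζ hζ
      have hζa : a < ζ := hζ.1
      have hζα : ζ ≤ α := hζ.2
      have hζ0 : 0 < ζ := lt_of_le_of_lt ha0.le hζa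
      have hba : 0 < ζ - a := sub_pos.2 hζa
      have hsq : α ^ 2 * θ ^ 2 = a ^ 2 := by rw [hadef, mul_pow, sq_abs]
      have hpos : 0 < ζ ^ 2 - a ^ 2 := by nlinarith
      -- the sqrt bound
      have hsqrt : (ζ - a) ^ ((1:ℝ) - p) * ζ ^ p ≤ Real.sqrt (ζ ^ 2 - a ^ 2) := by
        have e1 : (ζ - a) ^ ((1:ℝ) - p) = (ζ - a) ^ ((1:ℝ)/2) * (ζ - a) ^ ((1:ℝ)/2 - p) := by
          rw [← Real.rpow_add hba]; congr 1; ring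
        have e2 : (ζ - a) ^ ((1:ℝ)/2 - p) ≤ ζ ^ ((1:ℝ)/2 - p) :=
          Real.rpow_le_rpow hba.le (by linarith) (by linarith)
        have e3 : ζ ^ ((1:ℝ)/2 - p) * ζ ^ p = ζ ^ ((1:ℝ)/2) := by
          rw [← Real.rpow_add hζ0]; congr 1; ring
        have e4 : ζ ^ ((1:ℝ)/2) ≤ (ζ + a) ^ ((1:ℝ)/2) :=
          Real.rpow_le_rpow hζ0.le (by linarith) (by norm_num)
        calc (ζ - a) ^ ((1:ℝ) - p) * ζ ^ p
            = (ζ - a) ^ ((1:ℝ)/2) * ((ζ - a) ^ ((1:ℝ)/2 - p) * ζ ^ p) := by rw [e1]; ring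
          _ ≤ (ζ - a) ^ ((1:ℝ)/2) * (ζ ^ ((1:ℝ)/2 - p) * ζ ^ p) := by
              apply mul_le_mul_of_nonneg_left _ (by positivity)
              exact mul_le_mul_of_nonneg_right e2 (by positivity)
          _ = (ζ - a) ^ ((1:ℝ)/2) * ζ ^ ((1:ℝ)/2) := by rw [e3]
          _ ≤ (ζ - a) ^ ((1:ℝ)/2) * (ζ + a) ^ ((1:ℝ)/2) := by
              exact mul_le_mul_of_nonneg_left e4 (by positivity)
          _ = ((ζ - a) * (ζ + a)) ^ ((1:ℝ)/2) := (Real.mul_rpow hba.le (by linarith)).symm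
          _ = (ζ ^ 2 - a ^ 2) ^ ((1:ℝ)/2) := by congr 1; ring
          _ = Real.sqrt (ζ ^ 2 - a ^ 2) := (Real.sqrt_eq_rpow _).symm
      have hprod_pos : 0 < (ζ - a) ^ ((1:ℝ) - p) * ζ ^ p := by positivity
      have hA : 1 / Real.sqrt (ζ ^ 2 - a ^ 2) ≤ (ζ - a) ^ (p - 1) * ζ ^ (-p) := by
        have h1 : 1 / Real.sqrt (ζ ^ 2 - a ^ 2) ≤ 1 / ((ζ - a) ^ ((1:ℝ) - p) * ζ ^ p) :=
          one_div_le_one_div_of_le hprod_pos hsqrt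
        have h2 : 1 / ((ζ - a) ^ ((1:ℝ) - p) * ζ ^ p) = (ζ - a) ^ (p - 1) * ζ ^ (-p) := by
          rw [show p - 1 = -((1:ℝ) - p) by ring, Real.rpow_neg hba.le, Real.rpow_neg hζ0.le,
            one_div, mul_inv]
        rw [← h2]; exact h1
      have hB : Real.exp (-(α ^ 2 * ζ ^ 2 * (1 - θ) ^ 2) / (4 * (ζ ^ 2 - a ^ 2))) ≤ 1 := by
        calc Real.exp (-(α ^ 2 * ζ ^ 2 * (1 - θ) ^ 2) / (4 * (ζ ^ 2 - a ^ 2)))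
            ≤ Real.exp 0 := by
              apply Real.exp_le_exp.2
              apply div_nonpos_of_nonpos_of_nonneg (neg_nonpos.2 (by positivity)) (by positivity)
          _ = 1 := Real.exp_zero
      have hpow : ζ ^ κ / ζ ^ 2 = ζ ^ (κ - 2) := by
        rw [show (ζ:ℝ) ^ (2:ℕ) = ζ ^ ((2:ℕ):ℝ) from (Real.rpow_natCast ζ 2).symm,
          ← Real.rpow_sub hζ0]
        norm_num
      have hqbd : ζ ^ q ≤ a ^ q + α ^ q := by
        rcases le_or_gt 0 q with h | h
        · calc ζ ^ q ≤ α ^ q := Real.rpow_le_rpow hζ0.le hζα h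
            _ ≤ a ^ q + α ^ q := le_add_of_nonneg_left (by positivity)
        · calc ζ ^ q ≤ a ^ q := Real.rpow_le_rpow_of_nonpos ha0 hζa.le h.le
            _ ≤ a ^ q + α ^ q := le_add_of_nonneg_right (by positivity)
      have hmb : |m' ζ| ≤ M := by rw [← Real.norm_eq_abs]; exact hm'b ζ
      -- assemble
      simp only [hF, hsq]
      rw [Real.norm_eq_abs, abs_mul, abs_mul,
        abs_of_nonneg (by positivity : (0:ℝ) ≤ 1 / Real.sqrt (ζ ^ 2 - a ^ 2)),
        abs_of_nonneg (Real.exp_pos _).le, abs_div, abs_mul,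
        abs_of_nonneg (by positivity : (0:ℝ) ≤ ζ ^ κ),
        abs_of_nonneg (by positivity : (0:ℝ) ≤ ζ ^ 2)]
      calc 1 / Real.sqrt (ζ ^ 2 - a ^ 2) *
            Real.exp (-(α ^ 2 * ζ ^ 2 * (1 - θ) ^ 2) / (4 * (ζ ^ 2 - a ^ 2))) *
            (ζ ^ κ * |m' ζ| / ζ ^ 2)
          ≤ ((ζ - a) ^ (p - 1) * ζ ^ (-p)) * 1 * (ζ ^ κ * M / ζ ^ 2) := by
            apply mul_le_mul
            · apply mul_le_mul hA hB (Real.exp_pos _).le (by positivity)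
            · gcongr
            · positivity
            · positivity
        _ = ((ζ - a) ^ (p - 1) * ζ ^ (-p)) * (ζ ^ (κ - 2) * M) := by
            have e : ζ ^ κ * M / ζ ^ 2 = ζ ^ (κ - 2) * M := by
              rw [mul_comm, mul_div_assoc, hpow, mul_comm]
            rw [mul_one, e]
        _ = M * ((ζ - a) ^ (p - 1) * ζ ^ q) := by
            have : ζ ^ (-p) * ζ ^ (κ - 2) = ζ ^ q := by
              rw [← Real.rpow_add hζ0]; congr 1; rw [hqdef]; ring
            calc ((ζ - a) ^ (p - 1) * ζ ^ (-p)) * (ζ ^ (κ - 2) * M)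
                = M * ((ζ - a) ^ (p - 1) * (ζ ^ (-p) * ζ ^ (κ - 2))) := by ring
              _ = M * ((ζ - a) ^ (p - 1) * ζ ^ q) := by rw [this]
        _ ≤ M * ((ζ - a) ^ (p - 1) * (a ^ q + α ^ q)) := by
            apply mul_le_mul_of_nonneg_left _ hM0
            exact mul_le_mul_of_nonneg_left hqbd (by positivity)
        _ = (M * (a ^ q + α ^ q)) * (ζ - a) ^ (p - 1) := by ring
    -- integrate the bound
    have hgint : Integrable (fun ζ => (M * (a ^ q + α ^ q)) * (ζ - a) ^ (p - 1))
        (volume.restrict (Ioc a α)) :=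
      (aux_shift_integrableOn hp0).const_mul _
    have hnorm : ‖H θ‖ ≤ (M * (a ^ q + α ^ q)) * ((α - a) ^ p / p) := by
      rw [hHval θ, ← hadef]
      calc ‖∫ ζ in Ioc a α, F θ ζ‖
          ≤ ∫ ζ in Ioc a α, (M * (a ^ q + α ^ q)) * (ζ - a) ^ (p - 1) := by
            apply norm_integral_le_of_norm_le hgint
            rw [ae_restrict_iff' measurableSet_Ioc]
            exact Filter.Eventually.of_forall hptwise
        _ = (M * (a ^ q + α ^ q)) * ∫ ζ in Ioc a α, (ζ - a) ^ (p - 1) := by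
            rw [integral_const_mul]
        _ = (M * (a ^ q + α ^ q)) * ((α - a) ^ p / p) := by
            rw [aux_shift_integral hp0 haα]
    have hfin : ‖H θ‖ ≤ M * (α ^ q * (|θ| ^ q + 1)) * (α ^ p / p) := by
      have h1 : (α - a) ^ p / p ≤ α ^ p / p := by
        have hr : (α - a) ^ p ≤ α ^ p := Real.rpow_le_rpow (by linarith) (by linarith) hp0.le
        exact (div_le_div_iff_of_pos_right hp0).2 hr
      have h2 : a ^ q = α ^ q * |θ| ^ q := by rw [hadef, Real.mul_rpow hα.le (abs_nonneg θ)]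
      calc ‖H θ‖ ≤ (M * (a ^ q + α ^ q)) * ((α - a) ^ p / p) := hnorm
        _ ≤ (M * (a ^ q + α ^ q)) * (α ^ p / p) := by
            apply mul_le_mul_of_nonneg_left h1 (by positivity)
        _ = M * (α ^ q * (|θ| ^ q + 1)) * (α ^ p / p) := by rw [h2]; ring
    rw [norm_mul]
    calc ‖α / Real.sqrt Real.pi‖ * ‖H θ‖
        ≤ ‖α / Real.sqrt Real.pi‖ * (M * (α ^ q * (|θ| ^ q + 1)) * (α ^ p / p)) :=
          mul_le_mul_of_nonneg_left hfin (norm_nonneg _)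
      _ = C * (|θ| ^ q + 1) := by rw [hC, Real.norm_eq_abs]; ring
  -- conclude
  have hmain : IntegrableOn (fun θ => (α / Real.sqrt Real.pi) * H θ) (Ioo (-1) 1) volume := by
    apply Integrable.mono' (aux_dom_integrable q hq C)
      ((hHmeas.const_mul _).aestronglyMeasurable)
    have h0 : ∀ᵐ θ : ℝ, θ ≠ 0 := by
      refine ae_iff.2 ?_
      have he : {a : ℝ | ¬ a ≠ 0} = {0} := by ext x; simp
      rw [he]
      exact measure_singleton 0
    filter_upwards [ae_restrict_of_ae h0, ae_restrict_mem measurableSet_Ioo] with θ hθ0 hθ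
    exact hbound θ hθ0 hθ
  exact hmain.congr_fun hEq measurableSet_Ioo
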